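/- Let A = c·[[v, x],[0,1]] ∈ GL₂(R/n_{k+1}) with c ≡ 1 mod p a scalar, v ≡ 1 mod p, v ≢ 1 mod p², x ≡ 0 mod p², and let r ∈ m_R with pr ∈ n_k, k ≥ 2, in a local ring R with p ∉ m_R². Then (Id + pr·E₂₁)·A is conjugate to A modulo n_{k+1} by the matrix Id + r·(p/(v−1))·E₂₁; explicitly, (Id + r(p/(v−1))E₂₁)⁻¹ · (Id + pr·E₂₁)A · (Id + r(p/(v−1))E₂₁) ≡ A mod n_{k+1}. -/

import Mathlib

open IsLocalRing

/-- Let `R` be a local `O`-algebra with `p ∉ m_R²` and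
`n j := pR ∩ m_R^j`.  Let `A = c·[[v, x],[0, 1]]` with `c ≡ 1 mod p`, `v ≡ 1 mod p`,
`v ≢ 1 mod p²` (so `w := p/(v−1)` satisfies `w (v−1) = p` with `w` a unit),
`x ≡ 0 mod p²`, and let `r ∈ m_R` with `p r ∈ n k`, `k ≥ 2`.  Then
`(Id + pr·E₂₁)·A` is conjugate to `A` modulo `n (k+1)` by `E = Id + r·(p/(v−1))·E₂₁`:
`E⁻¹ · (Id + pr·E₂₁)·A · E ≡ A (mod n (k+1))`. -/
theorem stmt18 {R : Type*} [CommRing R] [IsLocalRing R]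
    (p c v x r w : R)
    (hpm : p ∈ maximalIdeal R) (hp2 : p ∉ (maximalIdeal R) ^ 2)
    (n : ℕ → Ideal R) (hn : ∀ j, n j = Ideal.span {p} ⊓ (maximalIdeal R) ^ j)
    (hc : ∃ c' : R, c = 1 + p * c')
    (hv : ∃ u : R, v = 1 + p * u)
    (hw : w * (v - 1) = p) (hwu : IsUnit w)
    (hx : ∃ x' : R, x = p ^ 2 * x')
    (k : ℕ) (hk : 2 ≤ k) (hr : r ∈ maximalIdeal R) (hpr : p * r ∈ n k)
    (A E Einv : Matrix (Fin 2) (Fin 2) R)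
    (hA : A = c • Matrix.of ![![v, x], ![0, 1]])
    (hE : E = 1 + (r * w) • Matrix.single 1 0 (1 : R))
    (hEinv : Einv = 1 - (r * w) • Matrix.single 1 0 (1 : R)) :
    ∀ i j : Fin 2,
      ((Einv * ((1 + (p * r) • Matrix.single 1 0 (1 : R)) * A) * E - A :
          Matrix (Fin 2) (Fin 2) R)) i j ∈ n (k + 1) := by
  obtain ⟨x', hx'⟩ := hx
  obtain ⟨u, hu⟩ := hv
  subst hx' hu hA hE hEinv
  have hprm : p * r ∈ (maximalIdeal R) ^ k := by
    have := hpr; rw [hn] at this; exact this.2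
  have hprp : p * r ∈ Ideal.span {p} := by
    have := hpr; rw [hn] at this; exact this.1
  have hkey : ∀ a : R, a ∈ maximalIdeal R → a * (p * r) ∈ n (1 + k) := by
    intro a ha
    rw [hn]
    refine ⟨Ideal.mul_mem_left _ _ hprp, ?_⟩
    rw [pow_add, pow_one]
    exact Ideal.mul_mem_mul ha hprm
  intro i j
  fin_cases i <;> fin_cases j <;>
    simp [Matrix.mul_apply, Fin.sum_univ_succ, Matrix.single, Matrix.one_apply]
  all_goals ring_nf
  · have h : c * p ^ 2 * x' * r * w = (c * w * p * x') * (p * r) := by ring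
    rw [h]
    exact hkey _ (Ideal.mul_mem_right _ _ (Ideal.mul_mem_left _ _ hpm))
  · have h : -(r * w * c * p * u) + r * c * p + r * c * p ^ 2 * u +
        r ^ 2 * w * c * p ^ 3 * x' - r ^ 2 * w ^ 2 * c * p ^ 2 * x' =
        (c * u * p + w * c * x' * r * p ^ 2 - w ^ 2 * c * x' * r * p) * (p * r) := by
      linear_combination (-(r * c)) * hw
    rw [h]
    refine hkey _ ?_
    refine Ideal.sub_mem _ (Ideal.add_mem _ ?_ ?_) ?_
    · exact Ideal.mul_mem_left _ _ hpm
    · exact Ideal.mul_mem_left _ _ (Ideal.pow_mem_of_mem _ hpm _ two_pos)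
    · exact Ideal.mul_mem_left _ _ hpm
  · have h : -(r * w * c * p ^ 2 * x') + r * c * p ^ 3 * x' =
        (c * p ^ 2 * x' - w * c * p * x') * (p * r) := by ring
    rw [h]
    refine hkey _ (Ideal.sub_mem _ ?_ ?_)
    · exact Ideal.mul_mem_right _ _ (Ideal.mul_mem_left _ _
        (Ideal.pow_mem_of_mem _ hpm _ two_pos))
    · exact Ideal.mul_mem_right _ _ (Ideal.mul_mem_left _ _ hpm)
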